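/- arXiv:1404.5057 — 4 statements merged into one kernel-verified Lean document; each statement's English description precedes it below -/
import Mathlib

section
/- Every minimal right ideal of a compact left-topological semigroup contains an idempotent element. -/
/-- `I` is a right ideal of the semigroup `S`: nonempty and `I * S ⊆ I`. -/
def IsRightIdeal {S : Type*} [Semigroup S] (I : Set S) : Prop :=
  I.Nonempty ∧ ∀ x ∈ I, ∀ s : S, x * s ∈ I

/-- `I` is a minimal right ideal: a right ideal properly containing no right ideal. -/
def IsMinimalRightIdeal {S : Type*} [Semigroup S] (I : Set S) : Prop :=
  IsRightIdeal I ∧ ∀ J : Set S, J ⊆ I → IsRightIdeal J → J = I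

/-- Every minimal right ideal of a compact left-topological semigroup contains an
idempotent element. -/
theorem minimalRightIdeal_exists_idempotent
    (S : Type*) [Semigroup S] [TopologicalSpace S] [CompactSpace S] [T2Space S]
    (hcont : ∀ s : S, Continuous fun t => s * t)
    (I : Set S) (hI : IsMinimalRightIdeal I) :
    ∃ u ∈ I, u * u = u := by
  obtain ⟨⟨⟨x, hx⟩, hideal⟩, hmin⟩ := hI
  -- I = x * S, which is compact
  have hJ : (fun t => x * t) '' Set.univ = I := by
    apply hmin
    · rintro _ ⟨t, -, rfl⟩; exact hideal x hx t
    · refine ⟨⟨x * x, ⟨x, trivial, rfl⟩⟩, ?_⟩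
      rintro _ ⟨t, -, rfl⟩ s
      exact ⟨t * s, trivial, (mul_assoc _ _ _).symm⟩
  have hIcomp : IsCompact I := by
    rw [← hJ]
    exact (isCompact_univ).image (hcont x)
  -- work in the multiplicative opposite
  have key : ∃ m ∈ MulOpposite.op '' I, m * m = m := by
    apply exists_idempotent_in_compact_subsemigroup
    · intro r
      have : Continuous fun p : Sᵐᵒᵖ => MulOpposite.op (r.unop * p.unop) :=
        MulOpposite.continuous_op.comp ((hcont r.unop).comp MulOpposite.continuous_unop)
      exact this
    · exact ⟨MulOpposite.op x, x, hx, rfl⟩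
    · exact hIcomp.image MulOpposite.continuous_op
    · rintro _ ⟨a, ha, rfl⟩ _ ⟨b, hb, rfl⟩
      exact ⟨b * a, hideal b hb a, rfl⟩
  obtain ⟨_, ⟨u, hu, rfl⟩, hidem⟩ := key
  refine ⟨u, hu, ?_⟩
  have := congrArg MulOpposite.unop hidem
  simpa using this
end

section
/- If M is a minimal subflow of the greatest G-ambit S(G) and N is any universal minimal G-flow, then M and N are isomorphic as G-flows; in particular, any two universal minimal G-flows are isomorphic. -/
universe u

/-- A `G`-flow: a compact Hausdorff space with a continuous right `G`-action. -/
structure GFlow (G : Type u) [Group G] [TopologicalSpace G] where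
  X : Type u
  [ts : TopologicalSpace X]
  [cpt : CompactSpace X]
  [t2 : T2Space X]
  act : X → G → X
  act_one : ∀ x, act x 1 = x
  act_mul : ∀ x (g h : G), act (act x g) h = act x (g * h)
  cont : Continuous fun p : X × G => act p.1 p.2

attribute [instance] GFlow.ts GFlow.cpt GFlow.t2

/-- A `G`-map between flows: continuous and equivariant. -/
def IsGMap {G : Type u} [Group G] [TopologicalSpace G] (F F' : GFlow G)
    (f : F.X → F'.X) : Prop :=
  Continuous f ∧ ∀ (x : F.X) (g : G), f (F.act x g) = F'.act (f x) g

/-- A flow is minimal iff every orbit is dense. -/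
def GFlow.MinimalFlow {G : Type u} [Group G] [TopologicalSpace G] (F : GFlow G) : Prop :=
  Nonempty F.X ∧ ∀ x : F.X, Dense {y : F.X | ∃ g : G, F.act x g = y}

/-- Subflow on a closed invariant subset. -/
def GFlow.sub {G : Type u} [Group G] [TopologicalSpace G] (F : GFlow G) (C : Set F.X)
    (hcl : IsClosed C) (hinv : ∀ x ∈ C, ∀ g : G, F.act x g ∈ C) : GFlow G where
  X := ↥C
  ts := inferInstance
  cpt := isCompact_iff_compactSpace.1 hcl.isCompact
  t2 := inferInstance
  act x g := ⟨F.act x.1 g, hinv x.1 x.2 g⟩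
  act_one x := Subtype.ext (F.act_one x.1)
  act_mul x g h := Subtype.ext (F.act_mul x.1 g h)
  cont := (F.cont.comp ((continuous_subtype_val.comp continuous_fst).prodMk
    continuous_snd)).subtype_mk _

/-- A set dense in its closure, viewed inside the subtype of the closure. -/
lemma dense_in_closure_subtype {X : Type u} [TopologicalSpace X] {S C : Set X}
    (hS : S ⊆ C) (hc : closure S = C) : Dense {y : ↥C | y.1 ∈ S} := by
  intro z
  rw [closure_subtype]
  have himg : Subtype.val '' {y : ↥C | y.1 ∈ S} = S := by
    ext x
    constructor
    · rintro ⟨y, hy, rfl⟩; exact hy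
    · intro hx; exact ⟨⟨x, hS hx⟩, hx, rfl⟩
  rw [himg, hc]
  exact z.2

/-- Uniqueness of the universal minimal flow: if `M` is a minimal subflow of the greatest
`G`-ambit `(SG, one)` and `N` is any universal minimal `G`-flow, then `M ≅ N` as `G`-flows. -/
theorem universal_minimal_flow_unique
    (G : Type u) [Group G] [TopologicalSpace G] [IsTopologicalGroup G]
    -- the greatest ambit `(SG, one)`
    (SG : GFlow G) (one : SG.X)
    (hdense : Dense {y : SG.X | ∃ g : G, SG.act one g = y})
    (hgreatest : ∀ (Y : GFlow G) (y₀ : Y.X), Dense {y : Y.X | ∃ g : G, Y.act y₀ g = y} →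
      ∃ f : SG.X → Y.X, IsGMap SG Y f ∧ f one = y₀)
    -- `M` is a minimal subflow of `SG`
    (M : Set SG.X) (hMne : M.Nonempty) (hMcl : IsClosed M)
    (hMinv : ∀ x ∈ M, ∀ g : G, SG.act x g ∈ M)
    (hMmin : ∀ Z : Set SG.X, Z ⊆ M → Z.Nonempty → IsClosed Z →
      (∀ x ∈ Z, ∀ g : G, SG.act x g ∈ Z) → Z = M)
    -- `N` is a universal minimal flow
    (N : GFlow G) (hNmin : N.MinimalFlow)
    (hNuniv : ∀ Y : GFlow G, Y.MinimalFlow → ∃ f : N.X → Y.X, IsGMap N Y f) :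
    -- conclusion: `M` (with the subspace structure) is isomorphic to `N` as a `G`-flow
    ∃ f : M → N.X, Continuous f ∧ Function.Bijective f ∧
      ∀ (x : SG.X) (hx : x ∈ M) (g : G),
        f ⟨SG.act x g, hMinv x hx g⟩ = N.act (f ⟨x, hx⟩) g := by
  classical
  haveI : CompactSpace ↥M := isCompact_iff_compactSpace.1 hMcl.isCompact
  -- notation for orbits
  set orb : SG.X → Set SG.X := fun x => {y : SG.X | ∃ g : G, SG.act x g = y} with horb
  have hactg : ∀ g : G, Continuous fun y : SG.X => SG.act y g := fun g =>
    SG.cont.comp (continuous_id.prodMk continuous_const)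
  have hmemorb : ∀ x : SG.X, x ∈ orb x := fun x => ⟨1, SG.act_one x⟩
  have horborb : ∀ x : SG.X, ∀ y ∈ orb x, ∀ g : G, SG.act y g ∈ orb x := by
    rintro x _ ⟨h, rfl⟩ g
    exact ⟨h * g, (SG.act_mul x h g).symm⟩
  have horbinv : ∀ x : SG.X, ∀ z ∈ closure (orb x), ∀ g : G, SG.act z g ∈ closure (orb x) := by
    intro x z hz g
    have hsub : closure (orb x) ⊆ (fun y => SG.act y g) ⁻¹' closure (orb x) :=
      closure_minimal (fun y hy => subset_closure (horborb x y hy g))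
        (isClosed_closure.preimage (hactg g))
    exact hsub hz
  -- the "left multiplication" maps
  have hlamex : ∀ x : SG.X, ∃ L : SG.X → SG.X, IsGMap SG SG L ∧ L one = x ∧
      ∀ z, L z ∈ closure (orb x) := by
    intro x
    have hx : x ∈ closure (orb x) := subset_closure (hmemorb x)
    let CF := SG.sub (closure (orb x)) isClosed_closure (horbinv x)
    have hd : Dense {y : CF.X | ∃ g : G, CF.act ⟨x, hx⟩ g = y} := by
      have h1 : Dense {y : ↥(closure (orb x)) | y.1 ∈ orb x} :=
        dense_in_closure_subtype subset_closure rfl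
      have h2 : {y : CF.X | ∃ g : G, CF.act ⟨x, hx⟩ g = y}
          = {y : ↥(closure (orb x)) | y.1 ∈ orb x} := by
        ext y
        constructor
        · rintro ⟨g, rfl⟩; exact ⟨g, rfl⟩
        · rintro ⟨g, hg⟩; exact ⟨g, Subtype.ext hg⟩
      rw [h2]; exact h1
    obtain ⟨F, hF, hF1⟩ := hgreatest CF ⟨x, hx⟩ hd
    refine ⟨fun z => (F z).1, ⟨continuous_subtype_val.comp hF.1,
      fun z g => congrArg Subtype.val (hF.2 z g)⟩, congrArg Subtype.val hF1,
      fun z => (F z).2⟩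
  choose lam hlamG hlam1 hlamM using hlamex
  -- uniqueness of G-maps out of SG
  have huniq : ∀ (Y : GFlow G) (f g : SG.X → Y.X), IsGMap SG Y f → IsGMap SG Y g →
      f one = g one → f = g := by
    intro Y f g hf hg h1
    refine Continuous.ext_on hdense hf.1 hg.1 ?_
    rintro y ⟨k, rfl⟩
    rw [hf.2, hg.2, h1]
  have hlam_uniq : ∀ (x : SG.X) (L : SG.X → SG.X), IsGMap SG SG L → L one = x → L = lam x :=
    fun x L hL h1 => huniq SG L (lam x) hL (hlamG x) (h1.trans (hlam1 x).symm)
  have hassoc : ∀ x y z : SG.X, lam x (lam y z) = lam (lam x y) z := by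
    intro x y z
    have : (lam x) ∘ (lam y) = lam (lam x y) := by
      refine hlam_uniq _ _ ⟨(hlamG x).1.comp (hlamG y).1, fun w g => ?_⟩ ?_
      · simp only [Function.comp_apply, (hlamG y).2, (hlamG x).2]
      · simp only [Function.comp_apply, hlam1 y]
    exact congrFun this z
  -- M is stable under lam by elements of M
  have hOM : ∀ m ∈ M, closure (orb m) ⊆ M := fun m hm =>
    closure_minimal (by rintro _ ⟨g, rfl⟩; exact hMinv m hm g) hMcl
  have hlamMem : ∀ m ∈ M, ∀ z : SG.X, lam m z ∈ M := fun m hm z => hOM m hm (hlamM m z)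
  have horbM : ∀ m ∈ M, closure (orb m) = M := fun m hm =>
    hMmin _ (hOM m hm) ⟨m, subset_closure (hmemorb m)⟩ isClosed_closure (horbinv m)
  -- idempotent in M (Ellis–Numakura)
  obtain ⟨u, huM, huu⟩ : ∃ u ∈ M, lam u u = u := by
    set S : Set (Set SG.X) := {A | A ⊆ M ∧ A.Nonempty ∧ IsClosed A ∧
      ∀ a ∈ A, ∀ b ∈ A, lam a b ∈ A} with hS
    have hMS : M ∈ S := ⟨subset_rfl, hMne, hMcl, fun a ha b _ => hlamMem a ha b⟩
    have hzorn : ∀ c ⊆ S, IsChain (fun x1 x2 => x1 ⊆ x2) c → c.Nonempty →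
        ∃ lb ∈ S, ∀ s ∈ c, lb ⊆ s := by
      intro c hcS hchain hcne
      refine ⟨⋂ i : c, (i : Set SG.X), ?_, fun s hs => Set.iInter_subset (fun i : c => (i : Set SG.X)) ⟨s, hs⟩⟩
      have hne : (⋂ i : c, (i : Set SG.X)).Nonempty := by
        haveI : Nonempty c := hcne.to_subtype
        refine IsCompact.nonempty_iInter_of_directed_nonempty_isCompact_isClosed _
          ?_ (fun i => (hcS i.2).2.1) (fun i => (hcS i.2).2.2.1.isCompact)
          (fun i => (hcS i.2).2.2.1)
        intro i j
        rcases hchain.total i.2 j.2 with h | h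
        · exact ⟨i, subset_rfl, h⟩
        · exact ⟨j, h, subset_rfl⟩
      obtain ⟨i₀⟩ := hcne.to_subtype
      refine ⟨(Set.iInter_subset _ i₀).trans (hcS i₀.2).1, hne,
        isClosed_iInter (fun i => (hcS i.2).2.2.1), ?_⟩
      intro a ha b hb
      exact Set.mem_iInter.2 fun i =>
        (hcS i.2).2.2.2 a (Set.mem_iInter.1 ha i) b (Set.mem_iInter.1 hb i)
    obtain ⟨A, -, hAmin⟩ := zorn_superset_nonempty S hzorn M hMS
    have hAS : A ∈ S := hAmin.1
    have hAeq : ∀ B ∈ S, B ⊆ A → B = A := fun B hB hBA =>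
      le_antisymm hBA (hAmin.2 hB hBA)
    obtain ⟨q, hq⟩ := hAS.2.1
    have h1 : lam q '' A = A := by
      have hsub : lam q '' A ⊆ A := by
        rintro _ ⟨a, ha, rfl⟩; exact hAS.2.2.2 q hq a ha
      refine hAeq _ ⟨hsub.trans hAS.1, ⟨lam q q, ⟨q, hq, rfl⟩⟩,
        ((hAS.2.2.1.isCompact.image (hlamG q).1)).isClosed, ?_⟩ hsub
      rintro _ ⟨a, ha, rfl⟩ _ ⟨b, hb, rfl⟩
      refine ⟨lam a (lam q b), hAS.2.2.2 a ha _ (hsub ⟨b, hb, rfl⟩), ?_⟩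
      rw [hassoc]
    obtain ⟨p, hp, hpq⟩ : ∃ p ∈ A, lam q p = q := by
      have : q ∈ lam q '' A := h1.symm ▸ hq
      obtain ⟨p, hp, hpq⟩ := this
      exact ⟨p, hp, hpq⟩
    have h2 : {p ∈ A | lam q p = q} = A := by
      refine hAeq _ ⟨?_, ⟨p, hp, hpq⟩, ?_, ?_⟩ (Set.sep_subset _ _)
      · exact (Set.sep_subset _ _).trans hAS.1
      · have : {p ∈ A | lam q p = q} = A ∩ (lam q) ⁻¹' {q} := by
          ext z; simp [Set.mem_sep_iff]
        rw [this]
        exact hAS.2.2.1.inter (isClosed_singleton.preimage (hlamG q).1)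
      · rintro a ⟨haA, haq⟩ b ⟨hbA, hbq⟩
        refine ⟨hAS.2.2.2 a haA b hbA, ?_⟩
        rw [hassoc, haq, hbq]
    have hqB : q ∈ {p ∈ A | lam q p = q} := h2.symm ▸ hq
    exact ⟨q, hAS.1 hq, hqB.2⟩
  -- lam u is the identity on M
  have hid : ∀ x ∈ M, lam u x = x := by
    have h0 : Set.EqOn (lam u) id (orb u) := by
      rintro _ ⟨g, rfl⟩
      show lam u (SG.act u g) = SG.act u g
      rw [(hlamG u).2, huu]
    have h1 : Set.EqOn (lam u) id (closure (orb u)) :=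
      h0.closure (hlamG u).1 continuous_id
    rw [horbM u huM] at h1
    exact fun x hx => h1 hx
  -- the subflow on M and its minimality
  set MF : GFlow G := SG.sub M hMcl hMinv with hMF
  have hMFmin : MF.MinimalFlow := by
    refine ⟨⟨⟨hMne.choose, hMne.choose_spec⟩⟩, ?_⟩
    intro x
    have h1 : Dense {y : ↥M | y.1 ∈ orb x.1} := by
      have := dense_in_closure_subtype (S := orb x.1) (C := M)
        (fun y hy => by obtain ⟨g, rfl⟩ := hy; exact hMinv x.1 x.2 g) (horbM x.1 x.2)
      exact this
    have h2 : {y : MF.X | ∃ g : G, MF.act x g = y} = {y : ↥M | y.1 ∈ orb x.1} := by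
      ext y
      constructor
      · rintro ⟨g, rfl⟩; exact ⟨g, rfl⟩
      · rintro ⟨g, hg⟩; exact ⟨g, Subtype.ext hg⟩
    rw [h2]; exact h1
  -- the map φ : M → N
  obtain ⟨n₀⟩ := hNmin.1
  obtain ⟨F, hF, -⟩ := hgreatest N n₀ (hNmin.2 n₀)
  set φ : ↥M → N.X := fun m => F m.1 with hφ
  have hφcont : Continuous φ := hF.1.comp continuous_subtype_val
  have hφequi : ∀ (m : ↥M) (g : G), φ (MF.act m g) = N.act (φ m) g := fun m g => hF.2 m.1 g
  -- φ is surjective since N is minimal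
  have hNminset : ∀ C : Set N.X, C.Nonempty → IsClosed C →
      (∀ y ∈ C, ∀ g : G, N.act y g ∈ C) → C = Set.univ := by
    rintro C ⟨c, hc⟩ hcl hinv
    have h1 : closure {y : N.X | ∃ g : G, N.act c g = y} ⊆ C :=
      closure_minimal (by rintro _ ⟨g, rfl⟩; exact hinv c hc g) hcl
    rw [(hNmin.2 c).closure_eq] at h1
    exact Set.eq_univ_of_univ_subset h1
  have hφsurj : Function.Surjective φ := by
    have hrange : Set.range φ = Set.univ := by
      refine hNminset _ ⟨φ ⟨hMne.choose, hMne.choose_spec⟩, Set.mem_range_self _⟩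
        (isCompact_range hφcont).isClosed ?_
      rintro _ ⟨m, rfl⟩ g
      exact ⟨MF.act m g, hφequi m g⟩
    intro y
    have : y ∈ Set.range φ := hrange.symm ▸ Set.mem_univ y
    exact this
  -- the map ψ : N → M, and the endomorphism θ = ψ ∘ φ of M
  obtain ⟨ψ, hψ⟩ := hNuniv MF hMFmin
  set θ : ↥M → ↥M := fun m => ψ (φ m) with hθ
  have hθcont : Continuous θ := hψ.1.comp hφcont
  have hθequi : ∀ (m : ↥M) (g : G), θ (MF.act m g) = MF.act (θ m) g := by
    intro m g
    show ψ (φ (MF.act m g)) = MF.act (ψ (φ m)) g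
    rw [hφequi, hψ.2]
  -- θ is left multiplication by v := θ(u)
  set v : SG.X := (θ ⟨u, huM⟩).1 with hv
  have hθlam : ∀ (x : SG.X) (hx : x ∈ M), (θ ⟨x, hx⟩).1 = lam v x := by
    have hΨ : (fun z => (θ ⟨lam u z, hlamMem u huM z⟩).1) = lam v := by
      refine hlam_uniq _ _ ⟨?_, ?_⟩ ?_
      · exact continuous_subtype_val.comp
          (hθcont.comp (((hlamG u).1).subtype_mk _))
      · intro z g
        have h1 : (⟨lam u (SG.act z g), hlamMem u huM _⟩ : ↥M)
            = MF.act ⟨lam u z, hlamMem u huM z⟩ g := Subtype.ext ((hlamG u).2 z g)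
        show (θ ⟨lam u (SG.act z g), hlamMem u huM _⟩).1
            = SG.act (θ ⟨lam u z, hlamMem u huM z⟩).1 g
        rw [h1, hθequi]
        rfl
      · show (θ ⟨lam u one, hlamMem u huM one⟩).1 = v
        rw [show (⟨lam u one, hlamMem u huM one⟩ : ↥M) = ⟨u, huM⟩ from
          Subtype.ext (hlam1 u)]
    intro x hx
    have h2 := congrFun hΨ x
    rwa [show (⟨lam u x, hlamMem u huM x⟩ : ↥M) = ⟨x, hx⟩ from
      Subtype.ext (hid x hx)] at h2
  -- any continuous equivariant self-map of M is surjective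
  have hendo_surj : ∀ T : ↥M → ↥M, Continuous T →
      (∀ (m : ↥M) (g : G), T (MF.act m g) = MF.act (T m) g) → Function.Surjective T := by
    intro T hTc hTe
    have himg : Subtype.val '' (Set.range T) = M := by
      refine hMmin _ ?_ ?_ ?_ ?_
      · rintro _ ⟨y, -, rfl⟩; exact y.2
      · exact ⟨(T ⟨hMne.choose, hMne.choose_spec⟩).1,
          ⟨T ⟨hMne.choose, hMne.choose_spec⟩, Set.mem_range_self _, rfl⟩⟩
      · exact ((isCompact_range hTc).image continuous_subtype_val).isClosed
      · rintro _ ⟨_, ⟨m, rfl⟩, rfl⟩ g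
        exact ⟨T (MF.act m g), Set.mem_range_self _, congrArg Subtype.val (hTe m g)⟩
    intro y
    have hy : y.1 ∈ Subtype.val '' (Set.range T) := himg.symm ▸ y.2
    obtain ⟨z, ⟨m, rfl⟩, hz⟩ := hy
    exact ⟨m, Subtype.ext hz⟩
  have hθsurj := hendo_surj θ hθcont hθequi
  obtain ⟨w', hw'⟩ := hθsurj ⟨u, huM⟩
  have hwM : w'.1 ∈ M := w'.2
  have hvw : lam v w'.1 = u := by
    have := hθlam w'.1 w'.2
    rw [Subtype.coe_eta] at this
    rw [← this, hw']
  -- the inverse-like map τ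
  set τ : ↥M → ↥M := fun m => ⟨lam w'.1 m.1, hlamMem w'.1 hwM m.1⟩ with hτ
  have hτcont : Continuous τ := ((hlamG w'.1).1.comp continuous_subtype_val).subtype_mk _
  have hτequi : ∀ (m : ↥M) (g : G), τ (MF.act m g) = MF.act (τ m) g := fun m g =>
    Subtype.ext ((hlamG w'.1).2 m.1 g)
  have hτsurj := hendo_surj τ hτcont hτequi
  have hθτ : ∀ m : ↥M, θ (τ m) = m := by
    intro m
    apply Subtype.ext
    rw [hθlam (τ m).1 (τ m).2]
    show lam v (lam w'.1 m.1) = m.1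
    rw [hassoc, hvw]
    exact hid m.1 m.2
  have hθinj : Function.Injective θ := by
    intro a b hab
    obtain ⟨a', rfl⟩ := hτsurj a
    obtain ⟨b', rfl⟩ := hτsurj b
    rw [hθτ a', hθτ b'] at hab
    rw [hab]
  have hφinj : Function.Injective φ := fun a b h => hθinj (congrArg ψ h)
  refine ⟨φ, hφcont, ⟨hφinj, hφsurj⟩, ?_⟩
  intro x hx g
  exact hF.2 x g
end

section
/- A countably infinite locally finite structure K is ultrahomogeneous (every isomorphism between finite substructures extends to an automorphism of K) if and only if K has the extension property: for all finite structures A ⊆ B in Age(K), every embedding of A into K extends to an embedding of B into K. -/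
open FirstOrder CategoryTheory

universe u v

/-- A structure is locally finite if it is the union of an increasing chain of finite
substructures. -/
def IsLocallyFinite (L : FirstOrder.Language.{u, v}) (M : Type*) [L.Structure M] : Prop :=
  ∃ A : ℕ → L.Substructure M, Monotone A ∧ (∀ n, ((A n : Set M)).Finite) ∧
    (⋃ n, ((A n : Set M))) = Set.univ

/-- `M` is ultrahomogeneous: every isomorphism between finite substructures of `M`
extends to an automorphism of `M`. -/
def IsUltrahomog (L : FirstOrder.Language.{u, v}) (M : Type*) [L.Structure M] : Prop :=
  ∀ S T : L.Substructure M, (S : Set M).Finite → (T : Set M).Finite →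
    ∀ f : S ≃[L] T, ∃ g : M ≃[L] M, ∀ x : S, g x = f x

/-- `M` has the extension property: for finite structures `A ⊆ B` in `Age(M)`, every
embedding of `A` into `M` extends to an embedding of `B` into `M`. -/
def HasExtensionProperty (L : FirstOrder.Language.{u, v}) (M : Type*) [L.Structure M] : Prop :=
  ∀ B : Bundled.{0} L.Structure, Finite B → Nonempty (B ↪[L] M) →
    ∀ (A : L.Substructure B) (f : A ↪[L] M),
      ∃ g : B ↪[L] M, ∀ x : A, g x = f x

/-!
In a locally finite structure the finitely generated substructures are exactly the finite ones,
so `IsUltrahomog` is Mathlib's `IsUltrahomogeneous`. An ultrahomogeneous structure has the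
extension property: the composite `A ↪ B ↪ M` is an embedding of a finite substructure and
so extends along `A ↪ B`. Conversely, the extension property applied to
`B = closure ({m} ∪ S)` extends a partial isomorphism with finite domain `S` to the new
point `m`; this makes `M` an extension pair with itself, and for a countable structure the
back-and-forth argument turns that into ultrahomogeneity.
-/

open FirstOrder.Language

namespace IsLocallyFinite

variable {L : FirstOrder.Language.{u, v}} {M : Type*} [L.Structure M]

theorem finite_of_fg (hlf : IsLocallyFinite L M) {S : L.Substructure M} (hS : S.FG) :
    (S : Set M).Finite := by
  obtain ⟨A, hmono, hfin, hunion⟩ := hlf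
  obtain ⟨t, htfin, rfl⟩ := Substructure.fg_def.1 hS
  have := htfin.to_subtype
  choose n hn using fun x : t => Set.mem_iUnion.1 (hunion ▸ Set.mem_univ (x : M))
  obtain ⟨N, hN⟩ := Finite.exists_le n
  have ht : t ⊆ A N := fun x hx => hmono (hN ⟨x, hx⟩) (hn ⟨x, hx⟩)
  exact (hfin N).subset (Substructure.closure_le.2 ht)

theorem isUltrahomog_iff (hlf : IsLocallyFinite L M) :
    IsUltrahomog L M ↔ L.IsUltrahomogeneous M := by
  constructor
  · intro hU S hS f
    have hT : (f.toHom.range : Set M).Finite :=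
      hlf.finite_of_fg ((S.fg_iff_structure_fg.1 hS).range f.toHom)
    obtain ⟨g, hg⟩ := hU S f.toHom.range (hlf.finite_of_fg hS) hT f.equivRange
    refine ⟨g, Embedding.ext fun x => ?_⟩
    simp [hg x, Embedding.equivRange_apply]
  · intro hU S T hS _ e
    have := hS.to_subtype
    obtain ⟨g, hg⟩ := hU S Substructure.FG.of_finite (T.subtype.comp e.toEmbedding)
    exact ⟨g, fun x => (DFunLike.congr_fun hg x).symm⟩

end IsLocallyFinite

theorem FirstOrder.Language.IsUltrahomogeneous.hasExtensionProperty
    {L : FirstOrder.Language.{u, v}} {M : Type*} [L.Structure M] (hU : L.IsUltrahomogeneous M) :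
    HasExtensionProperty L M := by
  intro B _ hBM A f
  obtain ⟨g, hg⟩ := hU.extend_embedding Structure.FG.of_finite f A.subtype (h := hBM)
  exact ⟨g, fun x => (DFunLike.congr_fun hg x).symm⟩

theorem HasExtensionProperty.isExtensionPair {L : FirstOrder.Language.{u, v}} {M : Type}
    [L.Structure M] (hEP : HasExtensionProperty L M) (hlf : IsLocallyFinite L M) :
    L.IsExtensionPair M M := by
  rw [isExtensionPair_iff_exists_embedding_closure_singleton_sup]
  intro S hS f m
  set P : L.Substructure M := Substructure.closure L {m} ⊔ S
  have : Finite P := (hlf.finite_of_fg ((Substructure.fg_closure_singleton m).sup hS)).to_subtype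
  let i : S ↪[L] P := Substructure.inclusion le_sup_right
  let A : L.Substructure P := i.toHom.range
  let fA : A ↪[L] M := f.comp i.equivRange.symm.toEmbedding
  obtain ⟨g, hg⟩ := hEP (Bundled.of P) ‹_› ⟨P.subtype⟩ A fA
  refine ⟨g, Embedding.ext fun x => ?_⟩
  exact ((hg (i.equivRange x)).trans (congrArg f (i.equivRange.symm_apply_apply x))).symm

theorem ultrahomogeneous_iff_extensionProperty_general
    (L : FirstOrder.Language.{u, v}) (M : Bundled.{0} L.Structure)
    (hcount : Countable M) (hlf : IsLocallyFinite L M) :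
    IsUltrahomog L M ↔ HasExtensionProperty L M := by
  rw [hlf.isUltrahomog_iff]
  refine ⟨IsUltrahomogeneous.hasExtensionProperty, fun hEP => ?_⟩
  have hCG : Structure.CG L M := Structure.cg_of_countable
  exact (isUltrahomogeneous_iff_IsExtensionPair hCG).2 (hEP.isExtensionPair hlf)

/-- A countably infinite locally finite structure is ultrahomogeneous iff it has the
extension property. -/
theorem ultrahomogeneous_iff_extensionProperty
    (L : FirstOrder.Language.{u, v}) (M : Bundled.{0} L.Structure)
    (hcount : Countable M) (hinf : Infinite M) (hlf : IsLocallyFinite L M) :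
    IsUltrahomog L M ↔ HasExtensionProperty L M :=
  ultrahomogeneous_iff_extensionProperty_general L M hcount hlf
end

section
/- Let 𝒞 be a class of finite structures with the joint embedding property and the embedding Ramsey property. Then 𝒞 has the amalgamation property. -/
open FirstOrder CategoryTheory

universe u v

/-- A class of finite structures with the joint embedding property and the embedding
Ramsey property has the amalgamation property (Nešetřil–Rödl). -/
theorem amalgamation_of_jointEmbedding_and_ramsey
    (L : FirstOrder.Language.{u, v}) (C : Set (Bundled.{0} L.Structure))
    (hfin : ∀ A ∈ C, Finite A)
    -- joint embedding property
    (hJEP : ∀ A ∈ C, ∀ B ∈ C, ∃ D ∈ C, Nonempty (A ↪[L] D) ∧ Nonempty (B ↪[L] D))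
    -- embedding Ramsey property
    (hRP : ∀ A ∈ C, ∀ B ∈ C, Nonempty (A ↪[L] B) → ∀ r : ℕ,
      ∃ D ∈ C, ∀ γ : (A ↪[L] D) → Fin r, ∃ f : B ↪[L] D,
        ∀ h h' : A ↪[L] B, γ (f.comp h) = γ (f.comp h')) :
    -- amalgamation property
    ∀ A ∈ C, ∀ B ∈ C, ∀ D ∈ C, ∀ (f : A ↪[L] B) (g : A ↪[L] D),
      ∃ E ∈ C, ∃ (r : B ↪[L] E) (s : D ↪[L] E), r.comp f = s.comp g := by
  intro A hA B hB D hD f g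
  obtain ⟨E₀, hE₀, ⟨i⟩, ⟨j⟩⟩ := hJEP B hB D hD
  obtain ⟨F, hF, hRam⟩ := hRP A hA E₀ hE₀ ⟨i.comp f⟩ 2
  classical
  set γ : (A ↪[L] F) → Fin 2 :=
    fun h => if ∃ b : B ↪[L] F, b.comp f = h then 0 else 1 with hγ
  obtain ⟨e, he⟩ := hRam γ
  have h1 : γ (e.comp (i.comp f)) = 0 := by
    simp only [hγ]
    rw [if_pos ⟨e.comp i, by rw [FirstOrder.Language.Embedding.comp_assoc]⟩]
  have h2 : γ (e.comp (j.comp g)) = 0 := by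
    rw [← he (j.comp g) (i.comp f)] at h1
    exact h1
  simp only [hγ] at h2
  by_cases hc : ∃ b : B ↪[L] F, b.comp f = e.comp (j.comp g)
  · obtain ⟨b, hb⟩ := hc
    exact ⟨F, hF, b, e.comp j, by rw [hb, FirstOrder.Language.Embedding.comp_assoc]⟩
  · rw [if_neg hc] at h2
    exact absurd h2 (by decide)
end
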